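/- For every state s ∈ S, every strategy σ ∈ Σ^Opt satisfies Pr_{σ,s}(□¬Bad) = Val(s); that is, Σ^Opt ⊆ Σ_{M,s}(□¬Bad). -/

import Mathlib

open scoped ENNReal NNReal Classical
open Filter

universe u v

variable {S : Type u} {A : Type v}

/-- A finite MDP: `P s a = some d` means action `a` is legal at `s` and `d` is a
probability distribution on `S`; every state has at least one legal action. -/
structure MDP (S : Type u) (A : Type v) [Fintype S] [Fintype A] where
  P : S → A → Option (S → NNReal)
  sum_one : ∀ s a d, P s a = some d → (∑ s', d s') = 1
  exists_legal : ∀ s, ∃ a, (P s a).isSome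

/-- Last state of an alternating path starting at `s` with steps `steps`. -/
def lastState : S → List (A × S) → S
  | s, [] => s
  | _, (_, s') :: rest => lastState s' rest

/-- A finite path: a start state together with a list of (action, next-state) steps. -/
structure FPath (S : Type u) (A : Type v) where
  start : S
  steps : List (A × S)

namespace FPath

def last (ρ : FPath S A) : S := lastState ρ.start ρ.steps

def states (ρ : FPath S A) : List S := ρ.start :: ρ.steps.map Prod.snd

def length (ρ : FPath S A) : ℕ := ρ.steps.length

end FPath

/-- A (raw) strategy: maps each finite path (start state + steps) to a distribution on actions. -/
def Strat (S : Type u) (A : Type v) := S → List (A × S) → A → ℝ≥0∞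

/-- Shifted strategy `σ_ρ` for `ρ = (s₀, pre)`: `σ_ρ(ρ') = σ(ρ·ρ')`. -/
def shiftStrat (σ : Strat S A) (s₀ : S) (pre : List (A × S)) : Strat S A :=
  fun _ steps a => σ s₀ (pre ++ steps) a

/-- Generic cylinder weight (product of strategy- and transition-probabilities along the
steps), relative to a transition kernel `p`. The accumulator `pre` is the path-prefix so far. -/
noncomputable def wtP (p : S → A → S → ℝ≥0∞) (σ : Strat S A) (s₀ : S) :
    List (A × S) → List (A × S) → ℝ≥0∞
  | _, [] => 1
  | pre, (a, s') :: rest =>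
      σ s₀ pre a * p (lastState s₀ pre) a s' * wtP p σ s₀ (pre ++ [(a, s')]) rest
  termination_by pre l => l.length

/-- Generic cylinder probability of path `ρ` from start state `s`, kernel `p`. -/
noncomputable def cylProbP (p : S → A → S → ℝ≥0∞) (σ : Strat S A) (s : S) (ρ : FPath S A) :
    ℝ≥0∞ :=
  if ρ.start = s then wtP p σ ρ.start [] ρ.steps else 0

namespace MDP

variable [Fintype S] [Fintype A]

def legal (M : MDP S A) (s : S) (a : A) : Prop := (M.P s a).isSome

noncomputable def prob (M : MDP S A) (s : S) (a : A) (s' : S) : ℝ≥0∞ :=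
  (M.P s a).elim 0 fun d => (d s' : ℝ≥0∞)

/-- `ρ` is a finite path of `M` from `s`: every action legal, every transition of
positive probability. -/
def IsPathFrom (M : MDP S A) : S → List (A × S) → Prop
  | _, [] => True
  | s, (a, s') :: rest => M.legal s a ∧ 0 < M.prob s a s' ∧ M.IsPathFrom s' rest

def IsPath (M : MDP S A) (ρ : FPath S A) : Prop := M.IsPathFrom ρ.start ρ.steps

/-- `σ` is a strategy: at every finite path it gives a probability distribution on actions
supported on actions legal at the last state. -/
def IsStrategy (M : MDP S A) (σ : Strat S A) : Prop :=
  ∀ s steps, M.IsPathFrom s steps →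
    (∑ a, σ s steps a) = 1 ∧ ∀ a, 0 < σ s steps a → M.legal (lastState s steps) a

/-- Cylinder probability `P_{σ,s}(ρ)` in `M`. -/
noncomputable def cylProb (M : MDP S A) (σ : Strat S A) (s : S) (ρ : FPath S A) : ℝ≥0∞ :=
  cylProbP M.prob σ s ρ

/-- `T` is a set of sink states: each `t ∈ T` has exactly one legal action, leading back
to `t` with probability `1`. -/
def SinkSet (M : MDP S A) (T : Set S) : Prop :=
  ∀ t ∈ T, (∃! a, M.legal t a) ∧ ∀ a, M.legal t a → M.prob t a t = 1

/-- Generic pruned finite-path predicate: all states have positive value `v` and every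
step uses an `opt` state-action pair with positive transition probability in `M`. -/
def IsPathFromPruned (M : MDP S A) (v : S → ℝ≥0∞) (opt : S → A → Prop) :
    S → List (A × S) → Prop
  | s, [] => 0 < v s
  | s, (a, s') :: rest =>
      0 < v s ∧ opt s a ∧ 0 < M.prob s a s' ∧ M.IsPathFromPruned v opt s' rest

/-! ### Reachability -/

/-- `ρ` is a `T`-hitting path: its last state lies in `T` and no other state does. -/
def HitsFirst (T : Set S) (ρ : FPath S A) : Prop :=
  ρ.last ∈ T ∧ ∀ x ∈ ρ.states.dropLast, x ∉ T

/-- `Pr_{σ,s}(◊T)`: sum over `T`-hitting paths starting at `s` of their cylinder probabilities. -/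
noncomputable def prReach (M : MDP S A) (σ : Strat S A) (s : S) (T : Set S) : ℝ≥0∞ :=
  ∑' ρ : {ρ : FPath S A // M.IsPath ρ ∧ HitsFirst T ρ ∧ ρ.start = s}, M.cylProb σ s ρ.1

/-- `Val(s)` for reachability: supremum over strategies of `Pr_{σ,s}(◊T)`. -/
noncomputable def reachVal (M : MDP S A) (T : Set S) (s : S) : ℝ≥0∞ :=
  ⨆ (σ : Strat S A) (_ : M.IsStrategy σ), M.prReach σ s T

/-- `(s,a) ∈ Opt` for reachability. -/
def OptR (M : MDP S A) (T : Set S) (s : S) (a : A) : Prop :=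
  M.legal s a ∧ M.reachVal T s = ∑ s', M.prob s a s' * M.reachVal T s'

/-- `σ ∈ Σ^Opt` for reachability. -/
def SigmaOptR (M : MDP S A) (T : Set S) (σ : Strat S A) : Prop :=
  ∀ s steps, M.IsPathFrom s steps → ∀ a, 0 < σ s steps a → M.OptR T (lastState s steps) a

/-- Transition probabilities of the pruned MDP `M'` for reachability. -/
noncomputable def probR' (M : MDP S A) (T : Set S) (s : S) (a : A) (s' : S) : ℝ≥0∞ :=
  if M.OptR T s a ∧ 0 < M.reachVal T s then
    M.prob s a s' * M.reachVal T s' / M.reachVal T s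
  else 0

/-- `ρ` is a finite path of the pruned MDP `M'` (reachability version). -/
def IsPathR' (M : MDP S A) (T : Set S) (ρ : FPath S A) : Prop :=
  M.IsPathFromPruned (M.reachVal T) (M.OptR T) ρ.start ρ.steps

/-- Cylinder probability `P'_{σ,s}(ρ)` in the pruned MDP `M'` (reachability version). -/
noncomputable def cylProbR' (M : MDP S A) (T : Set S) (σ : Strat S A) (s : S) (ρ : FPath S A) :
    ℝ≥0∞ :=
  cylProbP (M.probR' T) σ s ρ

/-- `Pr'_{σ,s}(◊T)` in the pruned MDP `M'`. -/
noncomputable def prReach' (M : MDP S A) (σ : Strat S A) (s : S) (T : Set S) : ℝ≥0∞ :=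
  ∑' ρ : {ρ : FPath S A // M.IsPathR' T ρ ∧ HitsFirst T ρ ∧ ρ.start = s},
    M.cylProbR' T σ s ρ.1

/-- Probability of hitting `T` for the first time in exactly `r` steps, in `M`. -/
noncomputable def hitLenProb (M : MDP S A) (σ : Strat S A) (s : S) (T : Set S) (r : ℕ) :
    ℝ≥0∞ :=
  ∑' ρ : {ρ : FPath S A // M.IsPath ρ ∧ HitsFirst T ρ ∧ ρ.start = s ∧ ρ.length = r},
    M.cylProb σ s ρ.1

/-- Probability of hitting `T` for the first time in exactly `r` steps, in `M'`. -/
noncomputable def hitLenProb' (M : MDP S A) (σ : Strat S A) (s : S) (T : Set S) (r : ℕ) :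
    ℝ≥0∞ :=
  ∑' ρ : {ρ : FPath S A // M.IsPathR' T ρ ∧ HitsFirst T ρ ∧ ρ.start = s ∧ ρ.length = r},
    M.cylProbR' T σ s ρ.1

/-- Conditional expected length to target `E_{σ,s}(len_T | ◊T)`. -/
noncomputable def condExpLen (M : MDP S A) (σ : Strat S A) (s : S) (T : Set S) : ℝ≥0∞ :=
  ∑' r : ℕ, (r : ℝ≥0∞) * M.hitLenProb σ s T r / M.prReach σ s T

/-- Expected length to target in `M'`, `E'_{σ,s}(len_T)`; `∞` unless `Pr'_{σ,s}(◊T) = 1`. -/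
noncomputable def expLen' (M : MDP S A) (σ : Strat S A) (s : S) (T : Set S) : ℝ≥0∞ :=
  if M.prReach' σ s T = 1 then ∑' r : ℕ, (r : ℝ≥0∞) * M.hitLenProb' σ s T r else ⊤

/-! ### Safety -/

/-- `Safe_n(σ,s)`: probability of the paths of length `n` from `s` avoiding `Bad`. -/
noncomputable def safeN (M : MDP S A) (σ : Strat S A) (s : S) (Bad : Set S) (n : ℕ) : ℝ≥0∞ :=
  ∑' ρ : {ρ : FPath S A //
      M.IsPath ρ ∧ ρ.start = s ∧ ρ.length = n ∧ ∀ x ∈ ρ.states, x ∉ Bad},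
    M.cylProb σ s ρ.1

/-- `Pr_{σ,s}(□¬Bad) := ⨅ n, Safe_n(σ,s)`. -/
noncomputable def prSafe (M : MDP S A) (σ : Strat S A) (s : S) (Bad : Set S) : ℝ≥0∞ :=
  ⨅ n : ℕ, M.safeN σ s Bad n

/-- `Val(s)` for safety: supremum over strategies of `Pr_{σ,s}(□¬Bad)`. -/
noncomputable def safeVal (M : MDP S A) (Bad : Set S) (s : S) : ℝ≥0∞ :=
  ⨆ (σ : Strat S A) (_ : M.IsStrategy σ), M.prSafe σ s Bad

/-- `(s,a) ∈ Opt` for safety. -/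
def OptS (M : MDP S A) (Bad : Set S) (s : S) (a : A) : Prop :=
  M.legal s a ∧ M.safeVal Bad s = ∑ s', M.prob s a s' * M.safeVal Bad s'

/-- `σ ∈ Σ^Opt` for safety. -/
def SigmaOptS (M : MDP S A) (Bad : Set S) (σ : Strat S A) : Prop :=
  ∀ s steps, M.IsPathFrom s steps → ∀ a, 0 < σ s steps a → M.OptS Bad (lastState s steps) a

/-- `UPreⁱ(Bad)`. -/
def UPre (M : MDP S A) (Bad : Set S) : ℕ → Set S
  | 0 => Bad
  | i + 1 => {s | ∀ a, M.legal s a → ∃ s' ∈ M.UPre Bad i, 0 < M.prob s a s'}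

/-- `Good := S \ UPre*(Bad)`. -/
def GoodSet (M : MDP S A) (Bad : Set S) : Set S := (⋃ i, M.UPre Bad i)ᶜ

/-- `V := S \ (Good ∪ Bad)`. -/
def VSet (M : MDP S A) (Bad : Set S) : Set S := (M.GoodSet Bad ∪ Bad)ᶜ

/-- `Pr_{σ,s}(GoodCyl(ρ)) := P_{σ,s}(ρ) · Pr_{σ_ρ, last(ρ)}(□¬Bad)`. -/
noncomputable def goodCyl (M : MDP S A) (σ : Strat S A) (s : S) (Bad : Set S) (ρ : FPath S A) :
    ℝ≥0∞ :=
  M.cylProb σ s ρ * M.prSafe (shiftStrat σ ρ.start ρ.steps) ρ.last Bad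

/-- Transition probabilities of the pruned MDP `M'` for safety. -/
noncomputable def probS' (M : MDP S A) (Bad : Set S) (s : S) (a : A) (s' : S) : ℝ≥0∞ :=
  if M.OptS Bad s a ∧ 0 < M.safeVal Bad s then
    M.prob s a s' * M.safeVal Bad s' / M.safeVal Bad s
  else 0

/-- `ρ` is a finite path of the pruned MDP `M'` (safety version). -/
def IsPathS' (M : MDP S A) (Bad : Set S) (ρ : FPath S A) : Prop :=
  M.IsPathFromPruned (M.safeVal Bad) (M.OptS Bad) ρ.start ρ.steps

/-- Cylinder probability `P'_{σ,s}(ρ)` in the pruned MDP `M'` (safety version). -/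
noncomputable def cylProbS' (M : MDP S A) (Bad : Set S) (σ : Strat S A) (s : S)
    (ρ : FPath S A) : ℝ≥0∞ :=
  cylProbP (M.probS' Bad) σ s ρ

end MDP

/-- `Reward_n(ρ) = ∑_{i<n} R(sᵢ, aᵢ)` for `ρ` starting at `s` with steps `steps`. -/
def rewardOf (R : S → A → ℝ) : S → List (A × S) → ℝ
  | _, [] => 0
  | s, (a, s') :: rest => R s a + rewardOf R s' rest

namespace MDP

variable [Fintype S] [Fintype A]

/-- `E'_{σ,s}(Reward_n)` in the pruned MDP `M'` (safety version). -/
noncomputable def expRewN' (M : MDP S A) (Bad : Set S) (R : S → A → ℝ) (σ : Strat S A)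
    (s : S) (n : ℕ) : ℝ :=
  ∑' ρ : {ρ : FPath S A // M.IsPathS' Bad ρ ∧ ρ.start = s ∧ ρ.length = n},
    (M.cylProbS' Bad σ s ρ.1).toReal * rewardOf R ρ.1.start ρ.1.steps

/-- `E'_{σ,s}(MP) := liminf_n (1/n)·E'_{σ,s}(Reward_n)`. -/
noncomputable def mp' (M : MDP S A) (Bad : Set S) (R : S → A → ℝ) (σ : Strat S A) (s : S) :
    ℝ :=
  Filter.atTop.liminf fun n : ℕ => M.expRewN' Bad R σ s n / n

/-- `E_{σ,s}(Reward_n | □¬Bad)`. -/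
noncomputable def condExpRewN (M : MDP S A) (Bad : Set S) (R : S → A → ℝ) (σ : Strat S A)
    (s : S) (n : ℕ) : ℝ :=
  (∑' ρ : {ρ : FPath S A // M.IsPath ρ ∧ ρ.start = s ∧ ρ.length = n},
    (M.goodCyl σ s Bad ρ.1).toReal * rewardOf R ρ.1.start ρ.1.steps) /
  (M.prSafe σ s Bad).toReal

/-- `E_{σ,s}(MP | □¬Bad) := liminf_n (1/n)·E_{σ,s}(Reward_n | □¬Bad)`. -/
noncomputable def condMP (M : MDP S A) (Bad : Set S) (R : S → A → ℝ) (σ : Strat S A)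
    (s : S) : ℝ :=
  Filter.atTop.liminf fun n : ℕ => M.condExpRewN Bad R σ s n / n

end MDP

/-! The inequality `Pr_{σ,s}(□¬Bad) ≤ Val(s)` holds because `σ` is one of the strategies in the
supremum defining `Val(s)`. Conversely, `Val` is harmonic along every action of `Σ^Opt`:
`Val(last ρ) = ∑_{a,s'} σ(ρ)(a)·P(last ρ, a, s')·Val(s')`. Unfolding this identity `n` times
along the paths of `σ` and bounding `Val` by `1` off `Bad` and by `0` on `Bad` at the end gives
`Val(s) ≤ Safe_n(σ,s)` for every `n`. -/

theorem lastState_append (s : S) (l₁ l₂ : List (A × S)) :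
    lastState s (l₁ ++ l₂) = lastState (lastState s l₁) l₂ := by
  induction l₁ generalizing s with
  | nil => rfl
  | cons p l ih => exact ih p.2

namespace MDP

variable [Fintype S] [Fintype A] (M : MDP S A)

theorem legal_of_prob_pos {s : S} {a : A} {s' : S} (h : 0 < M.prob s a s') : M.legal s a := by
  rcases hP : M.P s a with _ | d
  · simp [prob, hP] at h
  · simp [legal, hP]

theorem IsPathFrom.append_singleton {M : MDP S A} {s₀ : S} {pre : List (A × S)} {a : A} {s' : S}
    (h : M.IsPathFrom s₀ pre) (hp : 0 < M.prob (lastState s₀ pre) a s') :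
    M.IsPathFrom s₀ (pre ++ [(a, s')]) := by
  induction pre generalizing s₀ with
  | nil => exact ⟨M.legal_of_prob_pos hp, hp, trivial⟩
  | cons p l ih => exact ⟨h.1, h.2.1, ih h.2.2 hp⟩

def IsSafePathFrom (Bad : Set S) (s : S) (l : List (A × S)) : Prop :=
  M.IsPathFrom s l ∧ ∀ x ∈ s :: l.map Prod.snd, x ∉ Bad

theorem isSafePathFrom_nil {Bad : Set S} {s : S} :
    M.IsSafePathFrom Bad s [] ↔ s ∉ Bad := by
  simp [IsSafePathFrom, IsPathFrom]

theorem isSafePathFrom_cons {Bad : Set S} {s s' : S} {a : A} {l : List (A × S)} :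
    M.IsSafePathFrom Bad s ((a, s') :: l) ↔
      s ∉ Bad ∧ M.legal s a ∧ 0 < M.prob s a s' ∧ M.IsSafePathFrom Bad s' l := by
  simp only [IsSafePathFrom, IsPathFrom, List.map_cons, List.forall_mem_cons]
  tauto

/-- The conditional probability, given the history `pre` from `s₀`, that the next `n` steps
of `σ` avoid `Bad`. -/
noncomputable def safeNAfter (σ : Strat S A) (s₀ : S) (pre : List (A × S)) (Bad : Set S)
    (n : ℕ) : ℝ≥0∞ :=
  ∑' l : List (A × S),
    if M.IsSafePathFrom Bad (lastState s₀ pre) l ∧ l.length = n then wtP M.prob σ s₀ pre l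
    else 0

theorem safeN_eq_safeNAfter_nil (σ : Strat S A) (s : S) (Bad : Set S) (n : ℕ) :
    M.safeN σ s Bad n = M.safeNAfter σ s [] Bad n := by
  have hinj : Function.Injective (fun l : List (A × S) => (⟨s, l⟩ : FPath S A)) :=
    fun l₁ l₂ h => congrArg FPath.steps h
  refine (tsum_subtype {ρ : FPath S A | M.IsPath ρ ∧ ρ.start = s ∧ ρ.length = n ∧
    ∀ x ∈ ρ.states, x ∉ Bad} (M.cylProb σ s)).trans ?_
  rw [safeNAfter, ← hinj.tsum_eq]
  · refine tsum_congr fun l => ?_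
    simp only [Set.indicator_apply, Set.mem_ofPred_eq, IsPath, FPath.states, FPath.length,
      cylProb, cylProbP, IsSafePathFrom, lastState]
    congr 1
    simp only [true_and, eq_iff_iff]
    tauto
  · rintro ⟨s', l⟩ hl
    obtain rfl : s' = s := (Set.indicator_apply_ne_zero.mp hl).1.2.1
    exact ⟨l, rfl⟩

theorem safeNAfter_zero (σ : Strat S A) (s₀ : S) (pre : List (A × S)) (Bad : Set S) :
    M.safeNAfter σ s₀ pre Bad 0 = if lastState s₀ pre ∈ Bad then 0 else 1 := by
  rw [safeNAfter, tsum_eq_single []]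
  · by_cases h : lastState s₀ pre ∈ Bad <;> simp [isSafePathFrom_nil, h, wtP]
  · intro l hl
    simp [hl]

theorem safeNAfter_succ (σ : Strat S A) {s₀ : S} {pre : List (A × S)} {Bad : Set S}
    (hgood : lastState s₀ pre ∉ Bad) (n : ℕ) :
    M.safeNAfter σ s₀ pre Bad (n + 1) = ∑ p : A × S,
      σ s₀ pre p.1 * M.prob (lastState s₀ pre) p.1 p.2 * M.safeNAfter σ s₀ (pre ++ [p]) Bad n := by
  have hinj : Function.Injective fun q : (A × S) × List (A × S) => q.1 :: q.2 :=
    fun q₁ q₂ h => Prod.ext (List.cons.inj h).1 (List.cons.inj h).2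
  have hcons : ∀ (a : A) (s' : S) (l : List (A × S)),
      (if M.IsSafePathFrom Bad (lastState s₀ pre) ((a, s') :: l) ∧ l.length + 1 = n + 1
        then wtP M.prob σ s₀ pre ((a, s') :: l) else 0) =
      σ s₀ pre a * M.prob (lastState s₀ pre) a s' *
        if M.IsSafePathFrom Bad s' l ∧ l.length = n
        then wtP M.prob σ s₀ (pre ++ [(a, s')]) l else 0 := by
    intro a s' l
    rcases eq_zero_or_pos (M.prob (lastState s₀ pre) a s') with h0 | hpos
    · simp [isSafePathFrom_cons, h0]
    · simp only [isSafePathFrom_cons, M.legal_of_prob_pos hpos, hpos, hgood, not_false_eq_true,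
        Nat.add_right_cancel_iff, true_and]
      split_ifs
      · rw [wtP]
      · rw [mul_zero]
  rw [safeNAfter, ← hinj.tsum_eq, ENNReal.tsum_prod', tsum_fintype]
  · refine Finset.sum_congr rfl fun ⟨a, s'⟩ _ => ?_
    simp only [safeNAfter, ← ENNReal.tsum_mul_left, List.length_cons, lastState_append,
      lastState]
    exact tsum_congr (hcons a s')
  · rintro (_ | ⟨p, l⟩) hl
    · simp at hl
    · exact ⟨(p, l), rfl⟩

theorem safeVal_le_ite (Bad : Set S) (s : S) :
    M.safeVal Bad s ≤ if s ∈ Bad then 0 else 1 := by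
  refine iSup₂_le fun σ _ => (iInf_le _ 0).trans ?_
  rw [safeN_eq_safeNAfter_nil, safeNAfter_zero]
  rfl

theorem safeVal_eq_sum_of_optS {Bad : Set S} {t : S} {w : A → ℝ≥0∞} (hw : ∑ a, w a = 1)
    (hopt : ∀ a, 0 < w a → M.OptS Bad t a) :
    M.safeVal Bad t = ∑ p : A × S, w p.1 * M.prob t p.1 p.2 * M.safeVal Bad p.2 := by
  have hrow : ∀ a, ∑ s', w a * M.prob t a s' * M.safeVal Bad s' = w a * M.safeVal Bad t := by
    intro a
    rcases eq_zero_or_pos (w a) with h0 | hpos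
    · simp [h0]
    · simp only [(hopt a hpos).2, Finset.mul_sum, mul_assoc]
  rw [Fintype.sum_prod_type, Finset.sum_congr rfl fun a _ => hrow a, ← Finset.sum_mul, hw,
    one_mul]

theorem safeVal_le_safeNAfter {σ : Strat S A} {Bad : Set S} (hσ : M.IsStrategy σ)
    (hopt : M.SigmaOptS Bad σ) {s₀ : S} {pre : List (A × S)} (hpre : M.IsPathFrom s₀ pre)
    (n : ℕ) : M.safeVal Bad (lastState s₀ pre) ≤ M.safeNAfter σ s₀ pre Bad n := by
  induction n generalizing pre with
  | zero =>
    rw [safeNAfter_zero]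
    exact M.safeVal_le_ite Bad _
  | succ n ih =>
    by_cases hbad : lastState s₀ pre ∈ Bad
    · exact (M.safeVal_le_ite Bad _).trans (by simp [hbad])
    rw [M.safeNAfter_succ σ hbad, M.safeVal_eq_sum_of_optS (hσ s₀ pre hpre).1 (hopt s₀ pre hpre)]
    refine Finset.sum_le_sum fun ⟨a, s'⟩ _ => ?_
    rcases eq_zero_or_pos (M.prob (lastState s₀ pre) a s') with h0 | hpos
    · simp [h0]
    · have hnext := ih (hpre.append_singleton hpos)
      rw [lastState_append] at hnext
      gcongr
      exact hnext

end MDP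

theorem stmt9_general {S : Type u} {A : Type v} [Fintype S] [Fintype A]
    (M : MDP S A) (Bad : Set S) (s : S)
    (σ : Strat S A) (hσ : M.IsStrategy σ) (hopt : M.SigmaOptS Bad σ) :
    M.prSafe σ s Bad = M.safeVal Bad s := by
  refine le_antisymm (le_iSup₂_of_le σ hσ le_rfl) (le_iInf fun n => ?_)
  rw [M.safeN_eq_safeNAfter_nil]
  exact M.safeVal_le_safeNAfter hσ hopt (pre := []) trivial n

/-- every strategy `σ ∈ Σ^Opt` satisfies `Pr_{σ,s}(□¬Bad) = Val(s)`. -/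
theorem stmt9 {S : Type u} {A : Type v} [Fintype S] [Fintype A] [Nonempty S] [Nonempty A]
    (M : MDP S A) (Bad : Set S) (hBad : M.SinkSet Bad) (s : S)
    (σ : Strat S A) (hσ : M.IsStrategy σ) (hopt : M.SigmaOptS Bad σ) :
    M.prSafe σ s Bad = M.safeVal Bad s :=
  stmt9_general M Bad s σ hσ hopt
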